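/- arXiv:1702.06905 — 3 statements merged into one kernel-verified Lean document; each statement's English description precedes it below -/
import Mathlib

section
/- Let D and S be bounded nonnegative self-adjoint operators with D ≤ S ≤ (1+c)·D. Then Dom(S^{-1/2}) = Dom(D^{-1/2}); i.e., a vector f lies in the range of S^{1/2} if and only if it lies in the range of D^{1/2}. -/
open ContinuousLinearMap

/-!
The quadratic-form inequalities `D ≤ S ≤ (1 + c) D` say that `‖√S x‖` and `‖√D x‖` are
comparable. Douglas' lemma turns such a comparison into an inclusion of ranges: if
`‖A† x‖ ≤ C ‖B† x‖`, then `x ↦ ⟪g, A† x⟫` factors as a bounded functional of `B† x`, and its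
Hahn–Banach extension, represented by Riesz as `⟪h, ·⟫`, gives `B h = A g`.
-/

open RCLike InnerProductSpace
open scoped InnerProduct

theorem ContinuousLinearMap.exists_comp_eq_of_norm_le {𝕜 E G : Type*} [RCLike 𝕜]
    [NormedAddCommGroup E] [NormedSpace 𝕜 E] [NormedAddCommGroup G] [NormedSpace 𝕜 G]
    (T : E →L[𝕜] G) (φ : StrongDual 𝕜 E) (M : ℝ) (h : ∀ x, ‖φ x‖ ≤ M * ‖T x‖) :
    ∃ ψ : StrongDual 𝕜 G, ψ ∘L T = φ := by
  have hker : LinearMap.ker (T : E →ₗ[𝕜] G) ≤ LinearMap.ker (φ : E →ₗ[𝕜] 𝕜) := fun x hx => by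
    have hTx : T x = 0 := hx
    simpa [hTx] using h x
  let ℓ : LinearMap.range (T : E →ₗ[𝕜] G) →ₗ[𝕜] 𝕜 :=
    (LinearMap.ker (T : E →ₗ[𝕜] G)).liftQ φ hker ∘ₗ
      (LinearMap.quotKerEquivRange (T : E →ₗ[𝕜] G)).symm
  have hℓ : ∀ x, ℓ ⟨T x, LinearMap.mem_range_self _ x⟩ = φ x := fun x => by
    simp only [ℓ, LinearMap.coe_comp, LinearEquiv.coe_coe, Function.comp_apply]
    erw [LinearMap.quotKerEquivRange_symm_apply_image]
    rfl
  have hbound : ∀ y, ‖ℓ y‖ ≤ M * ‖y‖ := by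
    rintro ⟨_, x, rfl⟩
    exact (hℓ x).symm ▸ h x
  obtain ⟨ψ, hψ, -⟩ := exists_extension_norm_eq _ (ℓ.mkContinuous M hbound)
  exact ⟨ψ, ext fun x => (hψ ⟨T x, LinearMap.mem_range_self _ x⟩).trans (hℓ x)⟩

theorem ContinuousLinearMap.range_subset_range_of_norm_adjoint_le {𝕜 E F G : Type*} [RCLike 𝕜]
    [NormedAddCommGroup E] [InnerProductSpace 𝕜 E] [CompleteSpace E]
    [NormedAddCommGroup F] [InnerProductSpace 𝕜 F] [CompleteSpace F]
    [NormedAddCommGroup G] [InnerProductSpace 𝕜 G] [CompleteSpace G]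
    (A : F →L[𝕜] E) (B : G →L[𝕜] E) (C : ℝ) (h : ∀ x, ‖(A†) x‖ ≤ C * ‖(B†) x‖) :
    Set.range A ⊆ Set.range B := by
  rintro _ ⟨g, rfl⟩
  obtain ⟨ψ, hψ⟩ := (B†).exists_comp_eq_of_norm_le (innerSL 𝕜 g ∘L A†) (C * ‖g‖) fun x =>
    calc ‖⟪g, (A†) x⟫_𝕜‖ ≤ ‖g‖ * ‖(A†) x‖ := norm_inner_le_norm _ _
      _ ≤ ‖g‖ * (C * ‖(B†) x‖) := by gcongr; exact h x
      _ = C * ‖g‖ * ‖(B†) x‖ := by ring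
  refine ⟨(toDual 𝕜 G).symm ψ, ext_inner_right 𝕜 fun x => ?_⟩
  rw [← adjoint_inner_right, ← adjoint_inner_right, toDual_symm_apply, ← comp_apply, hψ]
  rfl

theorem IsSelfAdjoint.re_inner_mul_self_apply {𝕜 E : Type*} [RCLike 𝕜]
    [NormedAddCommGroup E] [InnerProductSpace 𝕜 E] [CompleteSpace E]
    {R : E →L[𝕜] E} (hR : IsSelfAdjoint R) (x : E) :
    re ⟪x, (R ∘L R) x⟫_𝕜 = ‖R x‖ ^ 2 := by
  rw [apply_norm_sq_eq_inner_adjoint_right, hR.adjoint_eq]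

theorem Real.le_sqrt_mul_of_sq_le_mul_sq {a b K : ℝ} (ha : 0 ≤ a) (hb : 0 ≤ b)
    (h : a ^ 2 ≤ K * b ^ 2) : a ≤ √K * b := by
  simpa [Real.sqrt_sq ha, Real.sqrt_mul' K (sq_nonneg b), Real.sqrt_sq hb] using
    Real.sqrt_le_sqrt h

theorem IsSelfAdjoint.range_subset_range_of_re_inner_le {𝕜 E : Type*} [RCLike 𝕜]
    [NormedAddCommGroup E] [InnerProductSpace 𝕜 E] [CompleteSpace E]
    {R₁ R₂ : E →L[𝕜] E} (h₁ : IsSelfAdjoint R₁) (h₂ : IsSelfAdjoint R₂) (K : ℝ)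
    (h : ∀ x, re ⟪x, (R₁ ∘L R₁) x⟫_𝕜 ≤ K * re ⟪x, (R₂ ∘L R₂) x⟫_𝕜) :
    Set.range R₁ ⊆ Set.range R₂ := by
  refine R₁.range_subset_range_of_norm_adjoint_le R₂ √K fun x => ?_
  rw [h₁.adjoint_eq, h₂.adjoint_eq]
  refine Real.le_sqrt_mul_of_sq_le_mul_sq (norm_nonneg _) (norm_nonneg _) ?_
  simpa only [h₁.re_inner_mul_self_apply, h₂.re_inner_mul_self_apply] using h x

theorem stmt10_general {H : Type*} [NormedAddCommGroup H] [InnerProductSpace ℂ H] [CompleteSpace H]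
    (D S : H →L[ℂ] H)
    (c : ℝ)
    (hDS : ∀ f : H, (inner ℂ f (D f) : ℂ).re ≤ (inner ℂ f (S f) : ℂ).re)
    (hSD : ∀ f : H, (inner ℂ f (S f) : ℂ).re ≤ (1 + c) * (inner ℂ f (D f) : ℂ).re)
    -- RD = D^{1/2}, RS = S^{1/2}
    (RD RS : H →L[ℂ] H)
    (hRDsa : IsSelfAdjoint RD)
    (hRD : RD ∘L RD = D)
    (hRSsa : IsSelfAdjoint RS)
    (hRS : RS ∘L RS = S) :
    ∀ f : H, f ∈ Set.range ⇑RS ↔ f ∈ Set.range ⇑RD := by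
  subst hRD hRS
  have hDS' : ∀ f, (⟪f, (RD ∘L RD) f⟫_ℂ).re ≤ 1 * (⟪f, (RS ∘L RS) f⟫_ℂ).re := by
    simpa only [one_mul] using hDS
  exact fun f => ⟨fun hf => hRSsa.range_subset_range_of_re_inner_le hRDsa (1 + c) hSD hf,
    fun hf => hRDsa.range_subset_range_of_re_inner_le hRSsa 1 hDS' hf⟩

theorem stmt10 {H : Type*} [NormedAddCommGroup H] [InnerProductSpace ℂ H] [CompleteSpace H]
    (D S : H →L[ℂ] H) (hDsa : IsSelfAdjoint D) (hSsa : IsSelfAdjoint S)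
    (c : ℝ) (hc : 0 ≤ c)
    (hDpos : ∀ f : H, 0 ≤ (inner ℂ f (D f) : ℂ).re)
    (hDS : ∀ f : H, (inner ℂ f (D f) : ℂ).re ≤ (inner ℂ f (S f) : ℂ).re)
    (hSD : ∀ f : H, (inner ℂ f (S f) : ℂ).re ≤ (1 + c) * (inner ℂ f (D f) : ℂ).re)
    (hDinj : Function.Injective D)
    -- RD = D^{1/2}, RS = S^{1/2}
    (RD RS : H →L[ℂ] H)
    (hRDsa : IsSelfAdjoint RD) (hRDpos : ∀ f : H, 0 ≤ (inner ℂ f (RD f) : ℂ).re)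
    (hRD : RD ∘L RD = D)
    (hRSsa : IsSelfAdjoint RS) (hRSpos : ∀ f : H, 0 ≤ (inner ℂ f (RS f) : ℂ).re)
    (hRS : RS ∘L RS = S) :
    ∀ f : H, f ∈ Set.range ⇑RS ↔ f ∈ Set.range ⇑RD :=
  stmt10_general D S c hDS hSD RD RS hRDsa hRD hRSsa hRS
end

section
/- Let B be a densely defined operator on a Hilbert space H with domain 𝒟, skew-Hermitian in the sense that ⟨φ, Bψ⟩ = -⟨Bφ, ψ⟩ for all φ, ψ ∈ 𝒟. If for some α > 0 both Ker(B* + αI) = {0} and Ker(B* - αI) = {0}, then the closure of B is skew-self-adjoint, i.e., (closure B)* = -(closure B). -/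
/-!
Skew-symmetry says that `B` is a formal adjoint of `-B`, so `B` is closable, its closure `T` is
again skew, and `T† = B†`. For real `c ≠ 0`, skewness gives `|c| ‖x‖ ≤ ‖c x + T x‖`, so the closed
operator `c + T` has closed range, whose orthogonal complement is `ker (T† + c)`; the hypothesis at
`c = -α` makes `T - α` surjective. Finally `-T ≤ T†`, and for `y ∈ dom T†` a solution of
`(T - α) x = -(T† + α) y` satisfies `y - x ∈ ker (T† + α) = 0`, whence `T† = -T`.
-/

open scoped ComplexConjugate

namespace LinearPMap

section Algebra

variable {R E F : Type*} [Ring R] [AddCommGroup E] [Module R E] [AddCommGroup F] [Module R F]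

theorem eq_of_le_of_forall_exists_add_eq {A S : E →ₗ.[R] F} (f : E →ₗ[R] F) (hle : A ≤ S)
    (hsurj : ∀ y : S.domain, ∃ x : A.domain, A x + f x = S y + f y)
    (hinj : ∀ y : S.domain, S y + f y = 0 → (y : E) = 0) : A = S := by
  refine eq_of_le_of_domain_eq hle (le_antisymm hle.1 fun y hy => ?_)
  obtain ⟨x, hx⟩ := hsurj ⟨y, hy⟩
  have hSx : S ⟨x, hle.1 x.2⟩ = A x := (hle.2 rfl).symm
  have hyx : y - x = 0 := hinj (⟨y, hy⟩ - ⟨x, hle.1 x.2⟩) <| by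
    rw [LinearPMap.map_sub, Submodule.coe_sub, _root_.map_sub f, hSx, ← sub_eq_zero.mpr hx.symm]
    abel
  exact sub_eq_zero.mp hyx ▸ x.2

end Algebra

section Topology

variable {R E F : Type*} [CommRing R] [AddCommGroup E] [AddCommGroup F] [Module R E] [Module R F]
  [TopologicalSpace E] [TopologicalSpace F] [IsTopologicalAddGroup F]

theorem IsClosed.vadd {f : E →ₗ[R] F} (hf : Continuous f) {T : E →ₗ.[R] F} (hT : T.IsClosed) :
    (f +ᵥ T).IsClosed := by
  have hgraph : ((f +ᵥ T).graph : Set (E × F)) =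
      (fun p : E × F => (p.1, p.2 - f p.1)) ⁻¹' T.graph := by
    ext ⟨x, y⟩
    simp only [SetLike.mem_coe, mem_graph_iff, Set.mem_preimage, vadd_apply]
    constructor
    · rintro ⟨u, rfl, rfl⟩
      exact ⟨u, rfl, by simp⟩
    · rintro ⟨u, rfl, hu⟩
      exact ⟨u, rfl, by simp [hu]⟩
  rw [LinearPMap.IsClosed, hgraph]
  exact hT.preimage (by fun_prop)

end Topology

section Normed

variable {𝕜 E F : Type*} [NontriviallyNormedField 𝕜] [NormedAddCommGroup E] [NormedSpace 𝕜 E]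
  [NormedAddCommGroup F] [NormedSpace 𝕜 F] [CompleteSpace E]

theorem IsClosed.isClosed_range_of_bound {T : E →ₗ.[𝕜] F} (hT : T.IsClosed) {C : ℝ} (hC : 0 < C)
    (hbound : ∀ x : T.domain, C * ‖(x : E)‖ ≤ ‖T x‖) : _root_.IsClosed (Set.range T) := by
  refine isSeqClosed_iff_isClosed.mp fun w z hw hwz => ?_
  choose u hu using hw
  have hcauchy : CauchySeq fun n => (u n : E) := by
    refine Metric.cauchySeq_iff.mpr fun ε hε => ?_
    obtain ⟨N, hN⟩ := Metric.cauchySeq_iff.mp hwz.cauchySeq (C * ε) (by positivity)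
    refine ⟨N, fun m hm n hn => ?_⟩
    have hmn := hbound (u m - u n)
    rw [LinearPMap.map_sub, hu, hu, Submodule.coe_sub] at hmn
    rw [dist_eq_norm]
    exact lt_of_mul_lt_mul_left (hmn.trans_lt (dist_eq_norm (w m) (w n) ▸ hN m hm n hn)) hC.le
  obtain ⟨x, hx⟩ := cauchySeq_tendsto_of_complete hcauchy
  have hmem : (x, z) ∈ T.graph :=
    hT.isSeqClosed (fun n => T.mem_graph (u n)) (hx.prodMk_nhds (by simpa [hu] using hwz))
  obtain ⟨y, -, hyz⟩ := (mem_graph_iff T).mp hmem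
  exact ⟨y, hyz⟩

end Normed

section InnerProduct

variable {𝕜 E F : Type*} [RCLike 𝕜] [NormedAddCommGroup E] [InnerProductSpace 𝕜 E]
  [NormedAddCommGroup F] [InnerProductSpace 𝕜 F]

local notation "⟪" x ", " y "⟫" => inner 𝕜 x y

theorem IsFormalAdjoint.mono {T T' : E →ₗ.[𝕜] F} {S : F →ₗ.[𝕜] E} (h : T.IsFormalAdjoint S)
    (hle : T' ≤ T) : T'.IsFormalAdjoint S := fun x y => by
  rw [hle.2 (x := x) (y := ⟨x, hle.1 x.2⟩) rfl]
  exact h _ y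

theorem IsFormalAdjoint.closure {T : E →ₗ.[𝕜] F} {S : F →ₗ.[𝕜] E} (h : T.IsFormalAdjoint S)
    (hT : T.IsClosable) : T.closure.IsFormalAdjoint S := by
  intro x y
  have hclosed : _root_.IsClosed {p : E × F | ⟪p.2, (y : F)⟫ = ⟪p.1, S y⟫} :=
    isClosed_eq (by fun_prop) (by fun_prop)
  have hgraph : (T.graph : Set (E × F)) ⊆ {p : E × F | ⟪p.2, (y : F)⟫ = ⟪p.1, S y⟫} := by
    rintro ⟨a, b⟩ hp
    obtain ⟨u, rfl, rfl⟩ := (mem_graph_iff T).mp hp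
    exact h u y
  refine closure_minimal hgraph hclosed (?_ : ((x : E), T.closure x) ∈ _)
  rw [← Submodule.topologicalClosure_coe, hT.graph_closure_eq_closure_graph]
  exact T.closure.mem_graph x

theorem IsFormalAdjoint.neg_symm {T : E →ₗ.[𝕜] F} {S : F →ₗ.[𝕜] E}
    (h : T.IsFormalAdjoint (-S)) : S.IsFormalAdjoint (-T) := fun y x => by
  have := h.symm y x
  rw [neg_apply, inner_neg_left] at this
  rw [neg_apply, inner_neg_right, ← this, neg_neg]

variable [CompleteSpace E]

theorem IsFormalAdjoint.isClosable {T : F →ₗ.[𝕜] E} {S : E →ₗ.[𝕜] F} (h : T.IsFormalAdjoint S)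
    (hS : Dense (S.domain : Set E)) : T.IsClosable :=
  isClosable_iff_exists_closed_extension.mpr ⟨S†, adjoint_isClosed hS, h.symm.le_adjoint hS⟩

theorem adjoint_closure {T : E →ₗ.[𝕜] F} (hT : Dense (T.domain : Set E)) (hcl : T.IsClosable) :
    T.closure† = T† := by
  have hclDense : Dense (T.closure.domain : Set E) := hT.mono T.le_closure.1
  refine le_antisymm ?_ ((adjoint_isFormalAdjoint hT).symm.closure hcl |>.le_adjoint hclDense)
  exact ((adjoint_isFormalAdjoint hclDense).symm.mono T.le_closure).le_adjoint hT

theorem exists_adjoint_apply_eq_of_inner_smul_add_eq_zero {T : E →ₗ.[𝕜] E}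
    (hT : Dense (T.domain : Set E)) (c : 𝕜) {z : E}
    (hz : ∀ x : T.domain, ⟪z, c • (x : E) + T x⟫ = 0) :
    ∃ hz' : z ∈ T†.domain, T† ⟨z, hz'⟩ = -(conj c) • z := by
  have hadj : ∀ x : T.domain, ⟪-(conj c) • z, x⟫ = ⟪z, T x⟫ := fun x => by
    rw [inner_smul_left, _root_.map_neg, RCLike.conj_conj, neg_mul,
      neg_eq_iff_add_eq_zero, ← inner_smul_right, ← inner_add_right, hz]
  have hmem : z ∈ T†.domain := mem_adjoint_domain_of_exists z ⟨_, hadj⟩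
  exact ⟨hmem, adjoint_apply_eq hT ⟨z, hmem⟩ hadj⟩

end InnerProduct

section Skew

variable {𝕜 E : Type*} [RCLike 𝕜] [NormedAddCommGroup E] [InnerProductSpace 𝕜 E]
  {T : E →ₗ.[𝕜] E}

local notation "⟪" x ", " y "⟫" => inner 𝕜 x y

theorem IsFormalAdjoint.closure_of_neg (h : T.IsFormalAdjoint (-T)) (hT : T.IsClosable) :
    T.closure.IsFormalAdjoint (-T.closure) :=
  ((h.closure hT).neg_symm).closure hT

theorem IsFormalAdjoint.re_inner_apply_self_of_neg (h : T.IsFormalAdjoint (-T)) (x : T.domain) :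
    RCLike.re ⟪(x : E), T x⟫ = 0 := by
  have hx := congrArg RCLike.re (h x x)
  rw [neg_apply, inner_neg_right, _root_.map_neg, ← inner_conj_symm, RCLike.conj_re] at hx
  linarith

theorem IsFormalAdjoint.abs_mul_norm_le_of_neg (h : T.IsFormalAdjoint (-T)) (c : ℝ)
    (x : T.domain) : |c| * ‖(x : E)‖ ≤ ‖(c : 𝕜) • (x : E) + T x‖ := by
  have hsq : ‖(c : 𝕜) • (x : E) + T x‖ ^ 2 = ‖(c : 𝕜) • (x : E)‖ ^ 2 + ‖T x‖ ^ 2 := by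
    rw [norm_add_sq (𝕜 := 𝕜), inner_smul_left, RCLike.conj_ofReal, RCLike.re_ofReal_mul,
      h.re_inner_apply_self_of_neg x]
    ring
  rw [← RCLike.norm_ofReal (K := 𝕜), ← norm_smul]
  nlinarith [norm_nonneg ((c : 𝕜) • (x : E)), norm_nonneg ((c : 𝕜) • (x : E) + T x),
    sq_nonneg ‖T x‖]

variable [CompleteSpace E]

theorem IsClosed.exists_smul_add_apply_eq_of_neg (hT : T.IsClosed) (hskew : T.IsFormalAdjoint (-T))
    (hdense : Dense (T.domain : Set E)) {c : ℝ} (hc : c ≠ 0)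
    (hker : ∀ z : T†.domain, T† z + (c : 𝕜) • (z : E) = 0 → (z : E) = 0) :
    ∀ z : E, ∃ x : T.domain, (c : 𝕜) • (x : E) + T x = z := by
  set A := (c : 𝕜) • (LinearMap.id : E →ₗ[𝕜] E) +ᵥ T
  have hA : A.IsClosed := hT.vadd (continuous_id.const_smul (c : 𝕜))
  have hrange : _root_.IsClosed (LinearMap.range A.toFun : Set E) :=
    hA.isClosed_range_of_bound (abs_pos.mpr hc) (hskew.abs_mul_norm_le_of_neg c)
  have horth : (LinearMap.range A.toFun)ᗮ = ⊥ := by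
    refine (Submodule.eq_bot_iff _).mpr fun z hz => ?_
    obtain ⟨hz', hTz⟩ := exists_adjoint_apply_eq_of_inner_smul_add_eq_zero hdense (c : 𝕜)
      fun x => (Submodule.mem_orthogonal' _ _).mp hz _ (LinearMap.mem_range_self _ x)
    refine hker ⟨z, hz'⟩ ?_
    rw [hTz, RCLike.conj_ofReal, neg_smul, neg_add_cancel]
  have := hrange.completeSpace_coe
  intro z
  obtain ⟨x, hx⟩ := LinearMap.range_eq_top.mp (Submodule.orthogonal_eq_bot_iff.mp horth) z
  exact ⟨x, hx⟩

end Skew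

end LinearPMap

open LinearPMap

theorem stmt11 {H : Type*} [NormedAddCommGroup H] [InnerProductSpace ℂ H] [CompleteSpace H]
    (B : H →ₗ.[ℂ] H) (hdense : Dense (B.domain : Set H))
    (hskew : ∀ φ ψ : B.domain, (inner ℂ (φ : H) (B ψ) : ℂ) = -(inner ℂ (B φ) (ψ : H) : ℂ))
    (α : ℝ) (hα : 0 < α)
    (hkerPlus : ∀ x : B.adjoint.domain, B.adjoint x + (α : ℂ) • (x : H) = 0 → (x : H) = 0)
    (hkerMinus : ∀ x : B.adjoint.domain, B.adjoint x - (α : ℂ) • (x : H) = 0 → (x : H) = 0) :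
    B.IsClosable ∧ B.closure.adjoint = -B.closure := by
  have hB : B.IsFormalAdjoint (-B) := fun φ ψ => by
    rw [LinearPMap.neg_apply, inner_neg_right, hskew, neg_neg]
  have hcl : B.IsClosable := hB.isClosable hdense
  refine ⟨hcl, ?_⟩
  have hdense' : Dense (B.closure.domain : Set H) := hdense.mono B.le_closure.1
  have hskew' : B.closure.IsFormalAdjoint (-B.closure) := hB.closure_of_neg hcl
  rw [← adjoint_closure hdense hcl] at hkerPlus hkerMinus
  have hsurj := hcl.closure_isClosed.exists_smul_add_apply_eq_of_neg hskew' hdense'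
    (neg_ne_zero.mpr hα.ne') (by simpa [sub_eq_add_neg] using hkerMinus)
  refine (eq_of_le_of_forall_exists_add_eq ((α : ℂ) • LinearMap.id)
    (hskew'.le_adjoint hdense') (fun y => ?_) hkerPlus).symm
  obtain ⟨x, hx⟩ := hsurj (-(B.closure† y + (α : ℂ) • (y : H)))
  refine ⟨x, ?_⟩
  simp only [LinearPMap.neg_apply, LinearMap.smul_apply, LinearMap.id_apply]
  push_cast at hx
  linear_combination (norm := module) -hx
end

section
/- Let S be a bounded nonnegative self-adjoint operator and A a bounded skew-self-adjoint operator on a Hilbert space H, and let L := -S + A. Then for λ > 0 the resolvent admits the factorization (λI - L)⁻¹ = (λI + S)^{-1/2} (I - C_λ)⁻¹ (λI + S)^{-1/2}, where C_λ := (λI + S)^{-1/2} A (λI + S)^{-1/2} is skew-self-adjoint with ‖(I - C_λ)⁻¹‖ ≤ 1. -/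
/-!
Write `R = (λ + S)^{1/2}` and `Q = R⁻¹`. Then `λ - L = R R - A = R (1 - C) R` with `C = Q A Q`,
so the resolvent is `Q (1 - C)⁻¹ Q`. Since `A` is skew-adjoint and `Q` self-adjoint, `C` is
skew-adjoint; then `i C` is self-adjoint, so its spectrum is real and `1 ∉ σ(C)`. Finally
`Re ⟪f, C f⟫ = 0` gives `‖(1 - C) f‖² = ‖f‖² + ‖C f‖² ≥ ‖f‖²`, which bounds `(1 - C)⁻¹` by `1`.
-/

open ContinuousLinearMap

theorem IsSelfAdjoint.of_mul_eq_one {R : Type*} [Monoid R] [StarMul R] {r q : R}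
    (hr : IsSelfAdjoint r) (h : r * q = 1) : IsSelfAdjoint q :=
  left_inv_eq_right_inv (by rw [← hr.star_eq, ← star_mul, h, star_one]) h

theorem isUnit_one_sub_of_mem_skewAdjoint {A : Type*} [CStarAlgebra A] {c : A}
    (hc : c ∈ skewAdjoint A) : IsUnit (1 - c) := by
  have h1 : (1 : ℂ) ∉ spectrum ℂ c := by
    intro h
    have hI : Complex.I ∈ spectrum ℂ (Complex.I • c) := by
      simpa using (spectrum.smul_mem_smul_iff (r := Units.mk0 Complex.I Complex.I_ne_zero)).mpr h
    have hI_real := (IsSelfAdjoint.I_smul_of_mem_skewAdjoint hc).mem_spectrum_eq_re hI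
    simp at hI_real
  simpa using spectrum.notMem_iff.mp h1

theorem mul_one_sub_mul_mul_eq_mul_self_sub {R : Type*} [Ring R] {r q : R} (h₁ : r * q = 1)
    (h₂ : q * r = 1) (a : R) : r * (1 - q * a * q) * r = r * r - a := by
  simp only [mul_sub, sub_mul, mul_one, ← mul_assoc, h₁, one_mul]
  simp only [mul_assoc, h₂, mul_one]

theorem ContinuousLinearMap.norm_le_one_of_mul_eq_one {𝕜 E : Type*} [NontriviallyNormedField 𝕜]
    [SeminormedAddCommGroup E] [NormedSpace 𝕜 E] {T K : E →L[𝕜] E}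
    (hT : ∀ x, ‖x‖ ≤ ‖T x‖) (h : T * K = 1) : ‖K‖ ≤ 1 :=
  opNorm_le_bound K zero_le_one fun x => by
    have hx := hT (K x)
    rwa [← mul_apply_eq_comp, h, one_apply_eq_self, ← one_mul ‖x‖] at hx

section InnerProductSpace

variable {H : Type*} [NormedAddCommGroup H] [InnerProductSpace ℂ H] [CompleteSpace H]

theorem ContinuousLinearMap.re_inner_apply_eq_zero_of_mem_skewAdjoint {C : H →L[ℂ] H}
    (hC : C ∈ skewAdjoint (H →L[ℂ] H)) (x : H) : (inner ℂ x (C x)).re = 0 := by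
  have h : starRingEnd ℂ (inner ℂ x (C x)) = -inner ℂ x (C x) := by
    rw [inner_conj_symm, ← adjoint_inner_right, ← star_eq_adjoint, skewAdjoint.mem_iff.mp hC,
      neg_apply, inner_neg_right]
  have hre := congrArg Complex.re h
  rw [Complex.neg_re, Complex.conj_re] at hre
  linarith

theorem ContinuousLinearMap.norm_le_norm_one_sub_apply_of_mem_skewAdjoint {C : H →L[ℂ] H}
    (hC : C ∈ skewAdjoint (H →L[ℂ] H)) (x : H) : ‖x‖ ≤ ‖(1 - C) x‖ := by
  have h : ‖(1 - C) x‖ ^ 2 = ‖x‖ ^ 2 + ‖C x‖ ^ 2 := by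
    rw [sub_apply, one_apply_eq_self, @norm_sub_sq ℂ, RCLike.re_to_complex,
      re_inner_apply_eq_zero_of_mem_skewAdjoint hC]
    ring
  exact le_of_sq_le_sq (by rw [h]; exact le_add_of_nonneg_right (sq_nonneg _)) (norm_nonneg _)

end InnerProductSpace

theorem stmt17_general {H : Type*} [NormedAddCommGroup H] [InnerProductSpace ℂ H] [CompleteSpace H]
    (S A : H →L[ℂ] H)
    (hA : ContinuousLinearMap.adjoint A = -A)
    (lam : ℝ)
    -- Rl = (lam I + S)^{1/2}, Ql = (lam I + S)^{-1/2}
    (Rl Ql : H →L[ℂ] H) (hRlsa : IsSelfAdjoint Rl)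
    (hRl : Rl ∘L Rl = (lam : ℂ) • 1 + S)
    (hQl₁ : Rl ∘L Ql = 1) (hQl₂ : Ql ∘L Rl = 1)
    (Cl : H →L[ℂ] H) (hCl : Cl = Ql ∘L A ∘L Ql) :
    ContinuousLinearMap.adjoint Cl = -Cl ∧
    ∃ K : H →L[ℂ] H, (1 - Cl) ∘L K = 1 ∧ K ∘L (1 - Cl) = 1 ∧ ‖K‖ ≤ 1 ∧
      ((lam : ℂ) • (1 : H →L[ℂ] H) - (-S + A)) ∘L (Ql ∘L K ∘L Ql) = 1 ∧
      (Ql ∘L K ∘L Ql) ∘L ((lam : ℂ) • (1 : H →L[ℂ] H) - (-S + A)) = 1 := by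
  have hQl : IsSelfAdjoint Ql := hRlsa.of_mul_eq_one hQl₁
  have hCl_skew : Cl ∈ skewAdjoint (H →L[ℂ] H) := by
    have := skewAdjoint.conjugate (skewAdjoint.mem_iff.mpr hA) Ql
    rw [hQl.star_eq, mul_assoc] at this
    rwa [hCl]
  obtain ⟨u, hu⟩ := isUnit_one_sub_of_mem_skewAdjoint hCl_skew
  let r : (H →L[ℂ] H)ˣ := ⟨Rl, Ql, hQl₁, hQl₂⟩
  have hresolvent : (lam : ℂ) • (1 : H →L[ℂ] H) - (-S + A) = ↑(r * u * r) := by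
    rw [Units.val_mul, Units.val_mul, hu, hCl, ← mul_def, ← mul_def, ← mul_assoc,
      mul_one_sub_mul_mul_eq_mul_self_sub hQl₁ hQl₂, mul_def, hRl]
    abel
  have hinv : Ql ∘L ↑u⁻¹ ∘L Ql = ↑(r * u * r)⁻¹ := by
    simp only [mul_inv_rev, mul_assoc]; rfl
  refine ⟨skewAdjoint.mem_iff.mp hCl_skew, ↑u⁻¹, hu ▸ u.mul_inv, hu ▸ u.inv_mul,
    norm_le_one_of_mul_eq_one (norm_le_norm_one_sub_apply_of_mem_skewAdjoint hCl_skew)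
      (hu ▸ u.mul_inv), ?_, ?_⟩
  · rw [hresolvent, hinv]; exact Units.mul_inv _
  · rw [hresolvent, hinv]; exact Units.inv_mul _

theorem stmt17 {H : Type*} [NormedAddCommGroup H] [InnerProductSpace ℂ H] [CompleteSpace H]
    (S A : H →L[ℂ] H)
    (hSsa : IsSelfAdjoint S) (hSpos : ∀ f : H, 0 ≤ (inner ℂ f (S f) : ℂ).re)
    (hA : ContinuousLinearMap.adjoint A = -A)
    (lam : ℝ) (hlam : 0 < lam)
    -- Rl = (lam I + S)^{1/2}, Ql = (lam I + S)^{-1/2}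
    (Rl Ql : H →L[ℂ] H) (hRlsa : IsSelfAdjoint Rl)
    (hRlpos : ∀ f : H, 0 ≤ (inner ℂ f (Rl f) : ℂ).re)
    (hRl : Rl ∘L Rl = (lam : ℂ) • 1 + S)
    (hQl₁ : Rl ∘L Ql = 1) (hQl₂ : Ql ∘L Rl = 1)
    (Cl : H →L[ℂ] H) (hCl : Cl = Ql ∘L A ∘L Ql) :
    ContinuousLinearMap.adjoint Cl = -Cl ∧
    ∃ K : H →L[ℂ] H, (1 - Cl) ∘L K = 1 ∧ K ∘L (1 - Cl) = 1 ∧ ‖K‖ ≤ 1 ∧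
      ((lam : ℂ) • (1 : H →L[ℂ] H) - (-S + A)) ∘L (Ql ∘L K ∘L Ql) = 1 ∧
      (Ql ∘L K ∘L Ql) ∘L ((lam : ℂ) • (1 : H →L[ℂ] H) - (-S + A)) = 1 :=
  stmt17_general S A hA lam Rl Ql hRlsa hRl hQl₁ hQl₂ Cl hCl
end
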